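/- Let B ≥ 1 and let a : ℕ → ℝ satisfy a_i < 0 for all i and |a_{i−1} + (3πi/2)^{2/3}| ≤ B for all i ≥ 1; define g(w) = ∑_{i∈ℕ} (1/(a_i − w) − 1/a_i) for w ∈ ℂ off the set {a_i} (the series converges absolutely there). Assume there exists c₀ ∈ ℝ such that for every θ with |θ| < 3π/4, g(r e^{iθ}) − c₀ − √(r e^{iθ}) → 0 as r → ∞. Let Y be a particle-generated Nevanlinna function with particle sequence x : ℕ → ℝ and constants b ∈ ℝ, c ≥ 0, and assume: (i) sup_{i} |x_i − a_i| < ∞; (ii) there exist θ₀ ∈ (0, 3π/4) and a sequence r_n → ∞ such that Y(r_n e^{iθ₀}) − √(r_n e^{iθ₀}) → 0. Then b and c are determined: for every w ∈ ℍ the series ∑_{i∈ℕ} (1/(x_i − w) − 1/a_i) converges absolutely and Y(w) = ∑_{i∈ℕ} (1/(x_i − w) − 1/a_i) − c₀. -/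

import Mathlib

open Filter Complex Topology

/-!
Renormalising the particle sum of `Y` with the reference points `aᵢ` instead of `xᵢ/(1 + xᵢ²)`
costs only an additive constant `K`, because `xᵢ - aᵢ` is bounded and `∑ 1/(1 + xᵢ²) < ∞`; hence
`Y(w) = c w + K + g(w) + ∑ ((xᵢ - w)⁻¹ - (aᵢ - w)⁻¹)` on `ℍ`. On a ray `w = rₙ e^{iθ₀}` every term
of the last sum is `O(1/(1 + xᵢ²) + 1/(1 + aᵢ²))` uniformly, so the sum tends to `0` by dominated
convergence, while `Y` and `g + c₀` are both `√w + o(1)` there. Thus `c w + K + c₀ → 0` with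
`|w| → ∞`, which forces `c = 0` and `K = -c₀`.
-/

lemma norm_inv_sub_inv_le {𝕜 : Type*} [NormedDivisionRing 𝕜] {u v : 𝕜} (hu : u ≠ 0)
    (hv : v ≠ 0) : ‖u⁻¹ - v⁻¹‖ ≤ ‖u - v‖ * (‖u⁻¹‖ ^ 2 + ‖v⁻¹‖ ^ 2) / 2 := by
  rw [inv_sub_inv' hu hv, norm_mul, norm_mul, norm_sub_rev]
  nlinarith [two_mul_le_add_sq ‖u⁻¹‖ ‖v⁻¹‖, norm_nonneg (u - v)]

lemma ofReal_sub_ne_zero_of_im_pos {w : ℂ} (hw : 0 < w.im) (q : ℝ) : (q : ℂ) - w ≠ 0 :=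
  fun h => by simpa [hw.ne'] using congrArg im h

lemma im_sq_mul_one_add_sq_le (q : ℝ) (w : ℂ) :
    w.im ^ 2 * (1 + q ^ 2) ≤ (1 + 4 * ‖w‖ ^ 2) * ‖(q : ℂ) - w‖ ^ 2 := by
  have h₁ : w.im ^ 2 ≤ ‖(q : ℂ) - w‖ ^ 2 :=
    sq_le_sq.2 (by simpa using abs_im_le_norm ((q : ℂ) - w))
  have h₂ : w.im ^ 2 ≤ ‖w‖ ^ 2 := sq_le_sq.2 (by simpa using abs_im_le_norm w)
  have h₃ : q ^ 2 ≤ 2 * ‖(q : ℂ) - w‖ ^ 2 + 2 * ‖w‖ ^ 2 := by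
    have h := norm_sub_norm_le (q : ℂ) w
    rw [norm_real, Real.norm_eq_abs] at h
    have := pow_le_pow_left₀ (abs_nonneg q) (sub_le_iff_le_add.1 h) 2
    nlinarith [sq_abs q, sq_nonneg (‖(q : ℂ) - w‖ - ‖w‖)]
  nlinarith [mul_le_mul_of_nonneg_left h₃ (sq_nonneg w.im),
    mul_le_mul_of_nonneg_left h₁ (sq_nonneg ‖w‖),
    mul_le_mul_of_nonneg_left h₂ (sq_nonneg ‖(q : ℂ) - w‖)]

lemma norm_inv_ofReal_sub_sq_le {w : ℂ} (hw : 0 < w.im) (q : ℝ) :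
    ‖((q : ℂ) - w)⁻¹‖ ^ 2 ≤ (1 + 4 * ‖w‖ ^ 2) / w.im ^ 2 * (1 + q ^ 2)⁻¹ := by
  have := norm_pos_iff.2 (ofReal_sub_ne_zero_of_im_pos hw q)
  rw [norm_inv, inv_pow, ← div_eq_mul_inv, div_div, inv_le_comm₀ (by positivity) (by positivity),
    inv_div, div_le_iff₀ (by positivity), mul_comm _ (1 + 4 * ‖w‖ ^ 2)]
  exact im_sq_mul_one_add_sq_le q w

lemma norm_inv_ofReal_sub_sub_inv_ofReal_sub_le {w : ℂ} (hw : 0 < w.im) (p q : ℝ) :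
    ‖((p : ℂ) - w)⁻¹ - ((q : ℂ) - w)⁻¹‖ ≤
      |p - q| * ((1 + 4 * ‖w‖ ^ 2) / w.im ^ 2) * ((1 + p ^ 2)⁻¹ + (1 + q ^ 2)⁻¹) / 2 := by
  refine (norm_inv_sub_inv_le (ofReal_sub_ne_zero_of_im_pos hw p)
    (ofReal_sub_ne_zero_of_im_pos hw q)).trans ?_
  rw [sub_sub_sub_cancel_right, ← ofReal_sub, norm_real, Real.norm_eq_abs, mul_assoc,
    mul_add (_ / _)]
  gcongr <;> exact norm_inv_ofReal_sub_sq_le hw _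

lemma norm_inv_ofReal_sub_sub_inv_ofReal_le {w : ℂ} (hw : 0 < w.im) {q : ℝ} (hq : 1 ≤ q ^ 2) :
    ‖((q : ℂ) - w)⁻¹ - (q : ℂ)⁻¹‖ ≤
      ‖w‖ * ((1 + 4 * ‖w‖ ^ 2) / w.im ^ 2 + 2) / 2 * (1 + q ^ 2)⁻¹ := by
  have hq₀ : (q : ℂ) ≠ 0 := ofReal_ne_zero.2 (by rintro rfl; norm_num at hq)
  have hinv : ‖(q : ℂ)⁻¹‖ ^ 2 ≤ 2 * (1 + q ^ 2)⁻¹ := by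
    rw [norm_inv, norm_real, Real.norm_eq_abs, inv_pow, sq_abs, ← div_eq_mul_inv,
      le_div_iff₀ (by positivity), inv_mul_le_iff₀ (by positivity)]
    linarith
  have := norm_inv_ofReal_sub_sq_le hw q
  refine (norm_inv_sub_inv_le (ofReal_sub_ne_zero_of_im_pos hw q) hq₀).trans ?_
  rw [sub_sub_cancel_left, norm_neg]
  nlinarith [mul_le_mul_of_nonneg_left (add_le_add this hinv) (norm_nonneg w)]

section BoundedPerturbation

variable {x a : ℕ → ℝ} {M : ℝ}

lemma summable_inv_one_add_sq_of_abs_sub_le (hM : ∀ i, |x i - a i| ≤ M)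
    (hx : Summable fun i => (1 + x i ^ 2)⁻¹) : Summable fun i => (1 + a i ^ 2)⁻¹ := by
  refine (hx.mul_left (2 + 2 * M ^ 2)).of_nonneg_of_le (fun _ => by positivity) fun i => ?_
  rw [← div_eq_mul_inv, le_div_iff₀ (by positivity), inv_mul_le_iff₀ (by positivity)]
  have := sq_le_sq' (abs_le.1 (hM i)).1 (abs_le.1 (hM i)).2
  nlinarith [sq_nonneg (x i - 2 * a i), mul_nonneg (sq_nonneg M) (sq_nonneg (a i))]

lemma summable_norm_inv_ofReal_sub_sub_inv_ofReal_sub (hM : ∀ i, |x i - a i| ≤ M)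
    (hx : Summable fun i => (1 + x i ^ 2)⁻¹) (ha : Summable fun i => (1 + a i ^ 2)⁻¹)
    {w : ℂ} (hw : 0 < w.im) :
    Summable fun i => ‖((x i : ℂ) - w)⁻¹ - ((a i : ℂ) - w)⁻¹‖ := by
  refine (((hx.add ha).mul_left (M * ((1 + 4 * ‖w‖ ^ 2) / w.im ^ 2))).div_const 2).of_nonneg_of_le
    (fun _ => norm_nonneg _) fun i => ?_
  refine (norm_inv_ofReal_sub_sub_inv_ofReal_sub_le hw (x i) (a i)).trans ?_
  gcongr
  exact hM i

lemma summable_norm_inv_ofReal_sub_sub_inv_ofReal (ha : Summable fun i => (1 + a i ^ 2)⁻¹)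
    {w : ℂ} (hw : 0 < w.im) : Summable fun i => ‖((a i : ℂ) - w)⁻¹ - (a i : ℂ)⁻¹‖ := by
  refine .of_norm_bounded_eventually_nat
    (ha.mul_left (‖w‖ * ((1 + 4 * ‖w‖ ^ 2) / w.im ^ 2 + 2) / 2)) ?_
  filter_upwards [ha.tendsto_atTop_zero.eventually (ge_mem_nhds (by norm_num : (0 : ℝ) < 2⁻¹))]
    with i hi
  have hai : 1 ≤ a i ^ 2 := by
    have := (inv_le_inv₀ (by positivity) (by positivity)).1 hi
    linarith
  rw [norm_norm]
  exact norm_inv_ofReal_sub_sub_inv_ofReal_le hw hai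

lemma summable_norm_inv_ofReal_sub_sub_inv_ofReal_of_abs_sub_le (hM : ∀ i, |x i - a i| ≤ M)
    (hx : Summable fun i => (1 + x i ^ 2)⁻¹) (ha : Summable fun i => (1 + a i ^ 2)⁻¹)
    {w : ℂ} (hw : 0 < w.im) : Summable fun i => ‖((x i : ℂ) - w)⁻¹ - (a i : ℂ)⁻¹‖ :=
  ((summable_norm_inv_ofReal_sub_sub_inv_ofReal_sub hM hx ha hw).add
    (summable_norm_inv_ofReal_sub_sub_inv_ofReal ha hw)).of_nonneg_of_le (fun _ => norm_nonneg _)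
    fun _ => norm_sub_le_norm_sub_add_norm_sub _ _ _

lemma summable_inv_ofReal_sub_div_one_add_sq (hM : ∀ i, |x i - a i| ≤ M)
    (hx : Summable fun i => (1 + x i ^ 2)⁻¹) (ha : Summable fun i => (1 + a i ^ 2)⁻¹) :
    Summable fun i => (a i : ℂ)⁻¹ - x i / (1 + x i ^ 2) := by
  have hxI (t : ℝ) : ((t : ℂ) - I)⁻¹ = (t + I) / (1 + t ^ 2) := by
    have : (1 + t ^ 2 : ℂ) ≠ 0 := by exact_mod_cast (by positivity : (1 + t ^ 2 : ℝ) ≠ 0)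
    rw [inv_eq_of_mul_eq_one_right]
    field_simp
    linear_combination -I_sq
  have hI := (summable_norm_inv_ofReal_sub_sub_inv_ofReal_of_abs_sub_le hM hx ha
    (w := I) (by simp)).of_norm
  refine (((summable_ofReal.2 hx).mul_left I).sub hI).congr fun i => ?_
  rw [hxI]
  push_cast
  ring

lemma tendsto_tsum_inv_ofReal_sub_sub_inv_ofReal_sub {α : Type*} {l : Filter α} {w : α → ℂ}
    {s : ℝ} (hs : 0 < s) (hw : Tendsto (‖w ·‖) l atTop)
    (hcone : ∀ᶠ n in l, s * ‖w n‖ ≤ (w n).im) (hM : ∀ i, |x i - a i| ≤ M)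
    (hx : Summable fun i => (1 + x i ^ 2)⁻¹) (ha : Summable fun i => (1 + a i ^ 2)⁻¹) :
    Tendsto (fun n => ∑' i, (((x i : ℂ) - w n)⁻¹ - ((a i : ℂ) - w n)⁻¹)) l (𝓝 0) := by
  have hinv (q : ℝ) : Tendsto (fun n => ((q : ℂ) - w n)⁻¹) l (𝓝 0) :=
    tendsto_inv₀_cobounded.comp <|
      (tendsto_const_sub_cobounded _).comp (tendsto_norm_atTop_iff_cobounded.1 hw)
  have hK : ∀ᶠ n in l, 0 < (w n).im ∧ (1 + 4 * ‖w n‖ ^ 2) / (w n).im ^ 2 ≤ 5 / s ^ 2 := by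
    filter_upwards [hcone, hw.eventually_ge_atTop 1] with n hn h1
    have him : 0 < (w n).im := by nlinarith
    refine ⟨him, ?_⟩
    rw [div_le_div_iff₀ (by positivity) (by positivity)]
    have h₁ := pow_le_pow_left₀ (by positivity) hn 2
    have h₂ := mul_le_mul_of_nonneg_left (one_le_pow₀ (n := 2) h1) (sq_nonneg s)
    nlinarith
  have hM₀ : 0 ≤ M := (abs_nonneg _).trans (hM 0)
  simpa using tendsto_tsum_of_dominated_convergence
    (bound := fun i => M * (5 / s ^ 2) * ((1 + x i ^ 2)⁻¹ + (1 + a i ^ 2)⁻¹) / 2)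
    (((hx.add ha).mul_left _).div_const 2) (fun i => (hinv (x i)).sub (hinv (a i)))
    (by
      filter_upwards [hK] with n ⟨him, hKn⟩ i
      refine (norm_inv_ofReal_sub_sub_inv_ofReal_sub_le him _ _).trans ?_
      gcongr
      exact hM i)

lemma tsum_inv_ofReal_sub_sub_div_one_add_sq_eq (hM : ∀ i, |x i - a i| ≤ M)
    (hx : Summable fun i => (1 + x i ^ 2)⁻¹) (ha : Summable fun i => (1 + a i ^ 2)⁻¹)
    {w : ℂ} (hw : 0 < w.im) :
    ∑' i, (((x i : ℂ) - w)⁻¹ - x i / (1 + x i ^ 2)) =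
      ∑' i, (((x i : ℂ) - w)⁻¹ - (a i : ℂ)⁻¹) + ∑' i, ((a i : ℂ)⁻¹ - x i / (1 + x i ^ 2)) := by
  rw [← (summable_norm_inv_ofReal_sub_sub_inv_ofReal_of_abs_sub_le hM hx ha hw).of_norm.tsum_add
    (summable_inv_ofReal_sub_div_one_add_sq hM hx ha)]
  simp only [sub_add_sub_cancel]

lemma tsum_inv_ofReal_sub_sub_inv_ofReal_eq (hM : ∀ i, |x i - a i| ≤ M)
    (hx : Summable fun i => (1 + x i ^ 2)⁻¹) (ha : Summable fun i => (1 + a i ^ 2)⁻¹)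
    {w : ℂ} (hw : 0 < w.im) :
    ∑' i, (((x i : ℂ) - w)⁻¹ - (a i : ℂ)⁻¹) =
      ∑' i, (((x i : ℂ) - w)⁻¹ - ((a i : ℂ) - w)⁻¹) + ∑' i, (((a i : ℂ) - w)⁻¹ - (a i : ℂ)⁻¹) := by
  rw [← (summable_norm_inv_ofReal_sub_sub_inv_ofReal_sub hM hx ha hw).of_norm.tsum_add
    (summable_norm_inv_ofReal_sub_sub_inv_ofReal ha hw).of_norm]
  simp only [sub_add_sub_cancel]

end BoundedPerturbation

lemma eq_zero_and_eq_of_tendsto_mul_add {α 𝕜 : Type*} [NormedDivisionRing 𝕜] {l : Filter α}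
    [l.NeBot] {c K L : 𝕜} {w : α → 𝕜} (h : Tendsto (fun n => c * w n + K) l (𝓝 L))
    (hw : Tendsto (‖w ·‖) l atTop) : c = 0 ∧ K = L := by
  obtain rfl : c = 0 := by
    by_contra hc
    refine not_tendsto_nhds_of_tendsto_atTop ?_ _ (h.sub_const K).norm
    simpa only [add_sub_cancel_right, norm_mul] using hw.const_mul_atTop (norm_pos_iff.2 hc)
  simp only [zero_mul, zero_add] at h
  exact ⟨rfl, tendsto_nhds_unique tendsto_const_nhds h⟩

theorem stmt_7_general
    (a : ℕ → ℝ)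
    (g : ℂ → ℂ)
    (hgdef : ∀ w : ℂ, (∀ i : ℕ, w ≠ (a i : ℂ)) →
      g w = ∑' i : ℕ, (((a i : ℂ) - w)⁻¹ - ((a i : ℂ))⁻¹))
    (c₀ : ℝ)
    (hg : ∀ θ : ℝ, |θ| < 3 * Real.pi / 4 →
      Filter.Tendsto
        (fun r : ℝ => g ((r : ℂ) * Complex.exp (θ * Complex.I)) - (c₀ : ℂ)
          - ((r : ℂ) * Complex.exp (θ * Complex.I)) ^ (1/2 : ℂ))
        Filter.atTop (nhds 0))
    (x : ℕ → ℝ) (b c : ℝ)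
    (hx : Summable fun i => 1 / (1 + (x i) ^ 2))
    (Y : ℂ → ℂ)
    (hY : ∀ w : ℂ, 0 < w.im →
      Y w = (b : ℂ) + (c : ℂ) * w
        + ∑' i : ℕ, (((x i : ℂ) - w)⁻¹ - (x i : ℂ) / (1 + (x i : ℂ) ^ 2)))
    (hclose : ∃ M : ℝ, ∀ i : ℕ, |x i - a i| ≤ M)
    (hdir : ∃ θ₀ : ℝ, 0 < θ₀ ∧ θ₀ < 3 * Real.pi / 4 ∧
      ∃ r : ℕ → ℝ, Filter.Tendsto r Filter.atTop Filter.atTop ∧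
        Filter.Tendsto
          (fun n : ℕ => Y ((r n : ℂ) * Complex.exp (θ₀ * Complex.I))
            - ((r n : ℂ) * Complex.exp (θ₀ * Complex.I)) ^ (1/2 : ℂ))
          Filter.atTop (nhds 0)) :
    ∀ w : ℂ, 0 < w.im →
      Summable (fun i : ℕ => ‖((x i : ℂ) - w)⁻¹ - ((a i : ℂ))⁻¹‖) ∧
      Y w = (∑' i : ℕ, (((x i : ℂ) - w)⁻¹ - ((a i : ℂ))⁻¹)) - (c₀ : ℂ) := by
  obtain ⟨M, hM⟩ := hclose
  obtain ⟨θ₀, hθ₀, hθ₀', r, hr, hYr⟩ := hdir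
  replace hx : Summable fun i => (1 + x i ^ 2)⁻¹ := by simpa only [one_div] using hx
  have ha := summable_inv_one_add_sq_of_abs_sub_le hM hx
  set K : ℂ := b + ∑' i, ((a i : ℂ)⁻¹ - x i / (1 + x i ^ 2))
  have hYK {w : ℂ} (hw : 0 < w.im) :
      Y w = c * w + K + ∑' i, (((x i : ℂ) - w)⁻¹ - (a i : ℂ)⁻¹) := by
    rw [hY w hw, tsum_inv_ofReal_sub_sub_div_one_add_sq_eq hM hx ha hw]
    ring
  have hYg {w : ℂ} (hw : 0 < w.im) :
      Y w = c * w + K + g w + ∑' i, (((x i : ℂ) - w)⁻¹ - ((a i : ℂ) - w)⁻¹) := by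
    rw [hYK hw, tsum_inv_ofReal_sub_sub_inv_ofReal_eq hM hx ha hw,
      hgdef w fun i h => by simp [h] at hw]
    ring
  set w : ℕ → ℂ := fun n => r n * exp (θ₀ * I)
  have hray : ∀ᶠ n in atTop, ‖w n‖ = r n ∧ (w n).im = Real.sin θ₀ * r n := by
    filter_upwards [hr.eventually_ge_atTop 0] with n hn
    rw [norm_mul, norm_real, norm_exp_ofReal_mul_I, mul_one, Real.norm_of_nonneg hn, im_ofReal_mul,
      exp_ofReal_mul_I_im, mul_comm]
    exact ⟨rfl, rfl⟩
  have hw : Tendsto (‖w ·‖) atTop atTop := hr.congr' (hray.mono fun n h => h.1.symm)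
  have hsin : 0 < Real.sin θ₀ := Real.sin_pos_of_pos_of_lt_pi hθ₀ (by linarith [Real.pi_pos])
  have hD := tendsto_tsum_inv_ofReal_sub_sub_inv_ofReal_sub hsin hw
    (hray.mono fun n h => by rw [h.1, h.2]) hM hx ha
  have hlim : Tendsto (fun n => (c : ℂ) * w n + (K + c₀)) atTop (𝓝 0) := by
    have := (hYr.sub ((hg θ₀ (by rwa [abs_of_pos hθ₀])).comp hr)).sub hD
    rw [sub_zero, sub_zero] at this
    refine this.congr' ?_
    filter_upwards [hray, hr.eventually_gt_atTop 0] with n hn hpos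
    rw [Function.comp_apply, hYg (by rw [hn.2]; positivity)]
    ring
  obtain ⟨hc, hK⟩ := eq_zero_and_eq_of_tendsto_mul_add hlim hw
  intro z hz
  refine ⟨summable_norm_inv_ofReal_sub_sub_inv_ofReal_of_abs_sub_le hM hx ha hz, ?_⟩
  rw [hYK hz, hc]
  linear_combination hK

/-- (Abstract form of Proposition 2.1.) Let `a` be negative reference
points within `B` of `−(3πi/2)^{2/3}`, let `g(w) = ∑ᵢ (1/(aᵢ − w) − 1/aᵢ)`, and assume
`g(re^{iθ}) − c₀ − √(re^{iθ}) → 0` along every direction `|θ| < 3π/4`. If the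
particle-generated Nevanlinna function `Y` has `supᵢ |xᵢ − aᵢ| < ∞` and
`Y(rₙe^{iθ₀}) − √(rₙe^{iθ₀}) → 0` along some direction `θ₀ ∈ (0, 3π/4)` and some
sequence `rₙ → ∞`, then `Y(w) = ∑ᵢ (1/(xᵢ − w) − 1/aᵢ) − c₀` on ℍ, the series
converging absolutely. -/
theorem stmt_7
    (B : ℝ) (hB : 1 ≤ B)
    (a : ℕ → ℝ) (ha_neg : ∀ i, a i < 0)
    (ha : ∀ i : ℕ, 1 ≤ i →
      |a (i - 1) + (3 * Real.pi * i / 2) ^ ((2 : ℝ) / 3)| ≤ B)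
    (g : ℂ → ℂ)
    (hgdef : ∀ w : ℂ, (∀ i : ℕ, w ≠ (a i : ℂ)) →
      g w = ∑' i : ℕ, (((a i : ℂ) - w)⁻¹ - ((a i : ℂ))⁻¹))
    (c₀ : ℝ)
    (hg : ∀ θ : ℝ, |θ| < 3 * Real.pi / 4 →
      Filter.Tendsto
        (fun r : ℝ => g ((r : ℂ) * Complex.exp (θ * Complex.I)) - (c₀ : ℂ)
          - ((r : ℂ) * Complex.exp (θ * Complex.I)) ^ (1/2 : ℂ))
        Filter.atTop (nhds 0))
    (x : ℕ → ℝ) (b c : ℝ) (hc : 0 ≤ c)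
    (hx : Summable fun i => 1 / (1 + (x i) ^ 2))
    (Y : ℂ → ℂ)
    (hY : ∀ w : ℂ, 0 < w.im →
      Y w = (b : ℂ) + (c : ℂ) * w
        + ∑' i : ℕ, (((x i : ℂ) - w)⁻¹ - (x i : ℂ) / (1 + (x i : ℂ) ^ 2)))
    (hclose : ∃ M : ℝ, ∀ i : ℕ, |x i - a i| ≤ M)
    (hdir : ∃ θ₀ : ℝ, 0 < θ₀ ∧ θ₀ < 3 * Real.pi / 4 ∧
      ∃ r : ℕ → ℝ, Filter.Tendsto r Filter.atTop Filter.atTop ∧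
        Filter.Tendsto
          (fun n : ℕ => Y ((r n : ℂ) * Complex.exp (θ₀ * Complex.I))
            - ((r n : ℂ) * Complex.exp (θ₀ * Complex.I)) ^ (1/2 : ℂ))
          Filter.atTop (nhds 0)) :
    ∀ w : ℂ, 0 < w.im →
      Summable (fun i : ℕ => ‖((x i : ℂ) - w)⁻¹ - ((a i : ℂ))⁻¹‖) ∧
      Y w = (∑' i : ℕ, (((x i : ℂ) - w)⁻¹ - ((a i : ℂ))⁻¹)) - (c₀ : ℂ) :=
  stmt_7_general a g hgdef c₀ hg x b c hx Y hY hclose hdir
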